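/- Every draft rule φ^π is resource monotonic: for any preference profile ≿ and finite nonempty sets X' ⊆ X of available objects, φ^π_i(≿, X) ≿_i^PD φ^π_i(≿, X') for every agent i. -/

import Mathlib

open Finset

noncomputable section

abbrev Obj := ℕ

def PD (r : Obj → Obj → Prop) (S T : Finset Obj) : Prop :=
  ∃ μ : {x // x ∈ T} → {x // x ∈ S}, Function.Injective μ ∧ ∀ x, r (μ x).1 x.1

def StrictPD (r : Obj → Obj → Prop) (S T : Finset Obj) : Prop :=
  PD r S T ∧ ¬ PD r T S

def LinProfile {n : ℕ} (pref : Fin n → Obj → Obj → Prop) : Prop :=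
  ∀ i, IsLinearOrder Obj (pref i)

def IsAlloc {n : ℕ} (A : Fin n → Finset Obj) (X : Finset Obj) : Prop :=
  (∀ i, A i ⊆ X) ∧ ∀ i j, i ≠ j → Disjoint (A i) (A j)

open Classical in
def topOf (r : Obj → Obj → Prop) (X : Finset Obj) : Obj :=
  if h : ∃ m ∈ X, ∀ x ∈ X, r m x then h.choose else 0

def remaining {n : ℕ} (pref : Fin n → Obj → Obj → Prop) (f : ℕ → Fin n)
    (X : Finset Obj) : ℕ → Finset Obj
  | 0 => X
  | k + 1 => (remaining pref f X k).erase (topOf (pref (f k)) (remaining pref f X k))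

def draft {n : ℕ} (pref : Fin n → Obj → Obj → Prop) (f : ℕ → Fin n)
    (X : Finset Obj) (i : Fin n) : Finset Obj :=
  ((Finset.range X.card).filter (fun k => f k = i)).image
    (fun k => topOf (pref (f k)) (remaining pref f X k))

def roundRobin {n : ℕ} (hn : 0 < n) (π : Equiv.Perm (Fin n)) (k : ℕ) : Fin n :=
  π.symm ⟨k % n, Nat.mod_lt k hn⟩

def draftPi {n : ℕ} (hn : 0 < n) (pref : Fin n → Obj → Obj → Prop)
    (π : Equiv.Perm (Fin n)) (X : Finset Obj) (i : Fin n) : Finset Obj :=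
  draft pref (roundRobin hn π) X i

/-! Resource monotonicity holds for every picking sequence, and for `X' ⊆ X` directly. Run the
same picking sequence on both pools. By induction on the step, the objects still available from
`X'` stay a subset of those available from `X`: if the picker's favourite in the larger pool also
lies in the smaller one, antisymmetry makes it her favourite there too. So at every step
`k < |X'|`, what agent `i` picks from `X` is at least as good as what she picks from `X'`, and
picks at different steps are different objects; matching each step with itself is the injection
that pairwise dominance asks for. -/

theorem Finset.exists_mem_forall_rel {α : Type*} (r : α → α → Prop) [IsTrans α r] [Std.Total r]
    {s : Finset α} (hs : s.Nonempty) : ∃ m ∈ s, ∀ x ∈ s, r m x := by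
  induction hs using Finset.Nonempty.cons_induction with
  | singleton a => exact ⟨a, mem_singleton_self a, fun x hx => (mem_singleton.1 hx) ▸ refl_of r a⟩
  | cons a s _ _ ih =>
    obtain ⟨m, hm, hmin⟩ := ih
    rcases total_of r a m with ham | hma
    · refine ⟨a, mem_cons_self a s, fun x hx => ?_⟩
      rcases mem_cons.1 hx with rfl | hx
      · exact refl_of r x
      · exact _root_.trans ham (hmin x hx)
    · refine ⟨m, mem_cons_of_mem hm, fun x hx => ?_⟩
      rcases mem_cons.1 hx with rfl | hx
      · exact hma
      · exact hmin x hx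

section TopOf

variable {r : Obj → Obj → Prop} [IsTrans Obj r] [Std.Total r] {S T : Finset Obj}

theorem topOf_mem (hS : S.Nonempty) : topOf r S ∈ S := by
  have h := S.exists_mem_forall_rel r hS
  rw [topOf, dif_pos h]
  exact h.choose_spec.1

theorem topOf_rel (hS : S.Nonempty) {x : Obj} (hx : x ∈ S) : r (topOf r S) x := by
  have h := S.exists_mem_forall_rel r hS
  rw [topOf, dif_pos h]
  exact h.choose_spec.2 x hx

theorem erase_topOf_subset_erase_topOf [Std.Antisymm r] (h : S ⊆ T) :
    S.erase (topOf r S) ⊆ T.erase (topOf r T) := by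
  intro a ha
  obtain ⟨ha_ne, haS⟩ := mem_erase.1 ha
  refine mem_erase.2 ⟨fun ha_top => ha_ne ?_, h haS⟩
  have hT : T.Nonempty := ⟨a, h haS⟩
  have hS : S.Nonempty := ⟨a, haS⟩
  have h_top_top : r a (topOf r S) := ha_top ▸ topOf_rel hT (h (topOf_mem hS))
  exact antisymm h_top_top (topOf_rel hS haS)

end TopOf

section PD

variable {r : Obj → Obj → Prop}

theorem PD.mono_left {S S₁ T : Finset Obj} (hS : S ⊆ S₁) (h : PD r S T) : PD r S₁ T := by
  obtain ⟨μ, hμ, hr⟩ := h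
  exact ⟨fun x => ⟨μ x, hS (μ x).2⟩, fun a b hab => hμ (Subtype.ext (Subtype.mk.inj hab)), hr⟩

theorem PD_image_image {ι : Type*} [DecidableEq ι] {s : Finset ι} {g g' : ι → Obj}
    (hg : Set.InjOn g s) (hr : ∀ k ∈ s, r (g k) (g' k)) : PD r (s.image g) (s.image g') := by
  choose κ hκs hκ using fun a : {x // x ∈ s.image g'} => mem_image.1 a.2
  refine ⟨fun a => ⟨g (κ a), mem_image_of_mem g (hκs a)⟩, fun a b hab => ?_, fun a => ?_⟩
  · have hκab : κ a = κ b := hg (hκs a) (hκs b) (congrArg Subtype.val hab)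
    exact Subtype.ext ((hκ a).symm.trans (hκab ▸ hκ b))
  · exact hκ a ▸ hr _ (hκs a)

end PD

section Draft

variable {n : ℕ} {pref : Fin n → Obj → Obj → Prop} {f : ℕ → Fin n} {X X' : Finset Obj}

def pick (pref : Fin n → Obj → Obj → Prop) (f : ℕ → Fin n) (X : Finset Obj) (k : ℕ) : Obj :=
  topOf (pref (f k)) (remaining pref f X k)

theorem draft_eq_image_pick (i : Fin n) :
    draft pref f X i = ((range X.card).filter (f · = i)).image (pick pref f X) :=
  rfl

theorem remaining_antitone : Antitone (remaining pref f X) :=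
  antitone_nat_of_succ_le fun _ => erase_subset _ _

theorem card_sub_le_card_remaining (k : ℕ) : X.card - k ≤ (remaining pref f X k).card := by
  induction k with
  | zero => exact Nat.sub_le _ _
  | succ k ih => exact (Nat.sub_le_sub_right ih 1).trans pred_card_le_card_erase

theorem remaining_nonempty {k : ℕ} (hk : k < X.card) : (remaining pref f X k).Nonempty :=
  card_pos.1 (lt_of_lt_of_le (Nat.sub_pos_of_lt hk) (card_sub_le_card_remaining k))

variable [∀ j, IsLinearOrder Obj (pref j)]

theorem pick_mem_remaining {k : ℕ} (hk : k < X.card) : pick pref f X k ∈ remaining pref f X k :=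
  topOf_mem (remaining_nonempty hk)

theorem pick_ne_of_lt {a b : ℕ} (hab : a < b) (hb : b < X.card) :
    pick pref f X b ≠ pick pref f X a :=
  ne_of_mem_erase (remaining_antitone hab (pick_mem_remaining hb))

theorem pick_injOn : Set.InjOn (pick pref f X) (Set.Iio X.card) := by
  intro a ha b hb hab
  by_contra hne
  rcases lt_or_gt_of_ne hne with h | h
  · exact pick_ne_of_lt h hb hab.symm
  · exact pick_ne_of_lt h ha hab

theorem remaining_subset_remaining (h : X' ⊆ X) (k : ℕ) :
    remaining pref f X' k ⊆ remaining pref f X k := by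
  induction k with
  | zero => exact h
  | succ k ih => exact erase_topOf_subset_erase_topOf ih

theorem pick_rel_pick_of_subset (h : X' ⊆ X) {k : ℕ} (hk : k < X'.card) :
    pref (f k) (pick pref f X k) (pick pref f X' k) :=
  let hmem := remaining_subset_remaining h k (pick_mem_remaining hk)
  topOf_rel ⟨_, hmem⟩ hmem

theorem draft_PD_draft_of_subset (h : X' ⊆ X) (i : Fin n) :
    PD (pref i) (draft pref f X i) (draft pref f X' i) := by
  have hcard : X'.card ≤ X.card := card_le_card h
  rw [draft_eq_image_pick, draft_eq_image_pick]
  refine PD.mono_left (image_subset_image (filter_subset_filter _ (range_subset_range.2 hcard)))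
    (PD_image_image (pick_injOn.mono fun k hk => ?_) fun k hk => ?_)
  · exact lt_of_lt_of_le (mem_range.1 (mem_filter.1 hk).1) hcard
  · obtain ⟨hk, hfk⟩ := mem_filter.1 hk
    exact hfk ▸ pick_rel_pick_of_subset h (mem_range.1 hk)

end Draft

theorem draft_resource_monotonic_general {n : ℕ} (hn : 0 < n) (π : Equiv.Perm (Fin n))
    (pref : Fin n → Obj → Obj → Prop) (hpref : LinProfile pref)
    (X X' : Finset Obj) (hsub : X' ⊆ X) (i : Fin n) :
    PD (pref i) (draftPi hn pref π X i) (draftPi hn pref π X' i) :=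
  have : ∀ j, IsLinearOrder Obj (pref j) := hpref
  draft_PD_draft_of_subset (f := roundRobin hn π) hsub i

theorem draft_resource_monotonic {n : ℕ} (hn : 0 < n) (π : Equiv.Perm (Fin n))
    (pref : Fin n → Obj → Obj → Prop) (hpref : LinProfile pref)
    (X X' : Finset Obj) (hX' : X'.Nonempty) (hsub : X' ⊆ X) (i : Fin n) :
    PD (pref i) (draftPi hn pref π X i) (draftPi hn pref π X' i) :=
  draft_resource_monotonic_general hn π pref hpref X X' hsub i
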